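/- arXiv:0806.4096 — 2 statements merged into one kernel-verified Lean document; each statement's English description precedes it below -/
import Mathlib

section
/- For every natural number n and every natural number x, the difference ∑_{k=1}^{x} k^n − (x^{n+1}/(n+1) + x^n/2) is a polynomial in x (with rational coefficients) of degree at most n−1; equivalently, (n+1)·∑_{k=1}^{x} k^n − x^{n+1} − (n+1)x^n/2 is given by a polynomial in x of degree at most n−1 with rational coefficients. -/
/-!
By Faulhaber's formula, `(n + 1) * ∑_{k=1}^{x} k ^ n = ∑_{i ≤ n} B'ᵢ (n+1 choose i) x ^ (n+1-i)`
with the Bernoulli numbers `B'₀ = 1`, `B'₁ = 1/2`. For `n ≥ 1` the terms `i = 0, 1` are exactly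
`x ^ (n+1) + (n+1) x ^ n / 2` and the remaining terms form a polynomial of degree at most `n - 1`;
for `n = 0` the difference is the constant `-1/2`.
-/

open Finset Polynomial

/-- The terms `i ≥ 2` of Faulhaber's formula, reindexed by `i - 2`. -/
noncomputable def faulhaberTail (n : ℕ) : ℚ[X] :=
  ∑ i ∈ range (n - 1), C (bernoulli' (i + 2) * (n + 1).choose (i + 2)) * X ^ (n - 1 - i)

theorem degree_faulhaberTail_le (n : ℕ) : (faulhaberTail n).degree ≤ (n - 1 : ℕ) := by
  refine (degree_sum_le _ _).trans (Finset.sup_le fun i _ => ?_)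
  exact (degree_C_mul_X_pow_le _ _).trans (by exact_mod_cast Nat.sub_le _ _)

theorem succ_mul_sum_Icc_pow_eq {n : ℕ} (hn : 0 < n) (x : ℕ) :
    ((n : ℚ) + 1) * ∑ k ∈ Icc 1 x, (k : ℚ) ^ n =
      (x : ℚ) ^ (n + 1) + ((n : ℚ) + 1) * (x : ℚ) ^ n / 2 + (faulhaberTail n).eval (x : ℚ) := by
  obtain ⟨m, rfl⟩ : ∃ m, n = m + 1 := ⟨n - 1, by omega⟩
  have hne : ((m + 1 : ℕ) : ℚ) + 1 ≠ 0 := by positivity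
  rw [← Ico_add_one_right_eq_Icc, sum_Ico_pow, mul_sum, sum_range_succ', sum_range_succ',
    faulhaberTail, eval_finsetSum]
  simp only [mul_div_cancel₀ _ hne, zero_add, bernoulli'_zero, bernoulli'_one,
    Nat.choose_zero_right, Nat.choose_one_right, Nat.add_sub_add_right, Nat.add_sub_cancel,
    eval_mul, eval_C, eval_pow, eval_X]
  push_cast
  ring

theorem faulhaber_tail (n : ℕ) :
    ∃ p : Polynomial ℚ, p.degree ≤ ((n - 1 : ℕ) : ℕ) ∧
      ∀ x : ℕ, ((n : ℚ) + 1) * ∑ k ∈ Finset.Icc 1 x, (k : ℚ)^n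
          - (x : ℚ)^(n+1) - ((n : ℚ) + 1) * (x : ℚ)^n / 2 = p.eval (x : ℚ) := by
  rcases Nat.eq_zero_or_pos n with rfl | hn
  · exact ⟨C (-1 / 2), degree_C_le, fun x => by norm_num⟩
  · refine ⟨faulhaberTail n, degree_faulhaberTail_le n, fun x => ?_⟩
    rw [succ_mul_sum_Icc_pow_eq hn]
    ring
end

section
/- The harmonic numbers minus the logarithm converge: the limit of H_x − log x as x → ∞ exists (and is the Euler–Mascheroni constant γ), where H_x = ∑_{k=1}^{x} 1/k; moreover 0.577215 < γ < 0.577216. -/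
/-!
`H_n - log n - γ` has the Euler–Maclaurin expansion `1/(2n) - 1/(12n²) + O(n⁻⁴)`. Comparing the
increment `1/(n+1) - log (1 + 1/n)` of `H_n - log n` with the fourth-order Taylor polynomial of
`log (1 + t)` shows that, for `n ≥ 64`, `H_n - log n - (1/(2n) - 1/(12n²) ± 1/(100 (n-1)³))` is
monotone in opposite directions for the two signs. Both sequences tend to `γ`, so `γ` lies between
their values at `n = 64`, which differ by less than `10⁻⁷`; there `H_64` is an explicit rational and
`log 64 = 6 log 2` is known to nine decimals.
-/

open Filter Real Topology

lemma le_of_tendsto_of_le_succ {α : Type*} [TopologicalSpace α] [Preorder α]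
    [OrderClosedTopology α] {f : ℕ → α} {k : ℕ} {a : α} (hf : ∀ n ≥ k, f n ≤ f (n + 1))
    (h : Tendsto f atTop (𝓝 a)) : f k ≤ a := by
  simpa using (monotone_add_nat_of_le_succ hf).ge_of_tendsto ((tendsto_add_atTop_iff_nat k).2 h) 0

lemma ge_of_tendsto_of_succ_le {α : Type*} [TopologicalSpace α] [Preorder α]
    [OrderClosedTopology α] {f : ℕ → α} {k : ℕ} {a : α} (hf : ∀ n ≥ k, f (n + 1) ≤ f n)
    (h : Tendsto f atTop (𝓝 a)) : a ≤ f k := by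
  simpa using (antitone_add_nat_of_succ_le hf).le_of_tendsto ((tendsto_add_atTop_iff_nat k).2 h) 0

lemma abs_log_one_add_inv_sub_le {x : ℝ} (hx : 1 < x) :
    |log (1 + 1 / x) - (1 / x - 1 / (2 * x ^ 2) + 1 / (3 * x ^ 3) - 1 / (4 * x ^ 4))|
      ≤ 1 / (x ^ 4 * (x - 1)) := by
  have hx₀ : 0 < x := by linarith
  have habs : |-(1 / x)| = 1 / x := by rw [abs_neg, abs_of_pos (by positivity)]
  have h := abs_log_sub_add_sum_range_le (habs ▸ (div_lt_one hx₀).2 hx) 4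
  simp only [Finset.sum_range_succ, Finset.sum_range_zero, sub_neg_eq_add, habs,
    Nat.reduceAdd] at h
  convert h using 1
  · congr 1
    push_cast
    ring
  · have : 0 < x - 1 := by linarith
    field_simp

noncomputable def harmonicCorrection (x : ℝ) : ℝ := 1 / (2 * x) - 1 / (12 * x ^ 2)

noncomputable def harmonicCorrectionError (x : ℝ) : ℝ := 1 / (100 * (x - 1) ^ 3)

lemma tendsto_harmonicCorrection : Tendsto harmonicCorrection atTop (𝓝 0) := by
  have h₁ : Tendsto (fun x : ℝ => 1 / (2 * x)) atTop (𝓝 0) :=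
    tendsto_const_nhds.div_atTop (tendsto_id.const_mul_atTop two_pos)
  have h₂ : Tendsto (fun x : ℝ => 1 / (12 * x ^ 2)) atTop (𝓝 0) :=
    tendsto_const_nhds.div_atTop ((tendsto_pow_atTop two_ne_zero).const_mul_atTop (by norm_num))
  rw [← sub_zero (0 : ℝ)]
  exact h₁.sub h₂

lemma tendsto_harmonicCorrectionError : Tendsto harmonicCorrectionError atTop (𝓝 0) :=
  tendsto_const_nhds.div_atTop <| ((tendsto_pow_atTop three_ne_zero).comp
    (tendsto_atTop_add_const_right atTop (-1) tendsto_id)).const_mul_atTop (by norm_num)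

lemma log_one_add_inv_sub_inv_add_one_le {x : ℝ} (hx : 64 ≤ x) :
    log (1 + 1 / x) - 1 / (x + 1) ≤
      (harmonicCorrection x + harmonicCorrectionError x)
        - (harmonicCorrection (x + 1) + harmonicCorrectionError (x + 1)) := by
  have hx₁ : 0 < x - 1 := by linarith
  have hy : 0 ≤ x - 64 := by linarith
  have hlog := (abs_le.1 (abs_log_one_add_inv_sub_le (by linarith : 1 < x))).2
  have hnum : 0 ≤ -1500 + 712 * x + 2088 * x ^ 2 - 324 * x ^ 3 - 964 * x ^ 4 + 36 * x ^ 5 := by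
    nlinarith [pow_nonneg hy 2, pow_nonneg hy 3, pow_nonneg hy 4, pow_nonneg hy 5]
  have hgap : (harmonicCorrection x + harmonicCorrectionError x)
        - (harmonicCorrection (x + 1) + harmonicCorrectionError (x + 1))
        - ((1 / x - 1 / (2 * x ^ 2) + 1 / (3 * x ^ 3) - 1 / (4 * x ^ 4)) - 1 / (x + 1)
          + 1 / (x ^ 4 * (x - 1)))
      = (-1500 + 712 * x + 2088 * x ^ 2 - 324 * x ^ 3 - 964 * x ^ 4 + 36 * x ^ 5)
          / (1200 * x ^ 4 * (x - 1) ^ 3 * (x + 1) ^ 2) := by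
    simp only [harmonicCorrection, harmonicCorrectionError, add_sub_cancel_right]
    have : 0 < x := by linarith
    field_simp
    ring
  have : 0 ≤ (-1500 + 712 * x + 2088 * x ^ 2 - 324 * x ^ 3 - 964 * x ^ 4 + 36 * x ^ 5)
      / (1200 * x ^ 4 * (x - 1) ^ 3 * (x + 1) ^ 2) := by positivity
  linarith

lemma le_log_one_add_inv_sub_inv_add_one {x : ℝ} (hx : 64 ≤ x) :
    (harmonicCorrection x - harmonicCorrectionError x)
        - (harmonicCorrection (x + 1) - harmonicCorrectionError (x + 1))
      ≤ log (1 + 1 / x) - 1 / (x + 1) := by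
  have hx₁ : 0 < x - 1 := by linarith
  have hy : 0 ≤ x - 64 := by linarith
  have hlog := (abs_le.1 (abs_log_one_add_inv_sub_le (by linarith : 1 < x))).1
  have hnum : 0 ≤ -900 - 688 * x + 2688 * x ^ 2 + 276 * x ^ 3 - 1364 * x ^ 4 + 36 * x ^ 5 := by
    nlinarith [pow_nonneg hy 2, pow_nonneg hy 3, pow_nonneg hy 4, pow_nonneg hy 5]
  have hgap : ((1 / x - 1 / (2 * x ^ 2) + 1 / (3 * x ^ 3) - 1 / (4 * x ^ 4)) - 1 / (x + 1)
          - 1 / (x ^ 4 * (x - 1)))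
        - ((harmonicCorrection x - harmonicCorrectionError x)
          - (harmonicCorrection (x + 1) - harmonicCorrectionError (x + 1)))
      = (-900 - 688 * x + 2688 * x ^ 2 + 276 * x ^ 3 - 1364 * x ^ 4 + 36 * x ^ 5)
          / (1200 * x ^ 4 * (x - 1) ^ 3 * (x + 1) ^ 2) := by
    simp only [harmonicCorrection, harmonicCorrectionError, add_sub_cancel_right]
    have : 0 < x := by linarith
    field_simp
    ring
  have : 0 ≤ (-900 - 688 * x + 2688 * x ^ 2 + 276 * x ^ 3 - 1364 * x ^ 4 + 36 * x ^ 5)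
      / (1200 * x ^ 4 * (x - 1) ^ 3 * (x + 1) ^ 2) := by positivity
  linarith

lemma harmonic_sub_log_succ_sub {n : ℕ} (hn : n ≠ 0) :
    ((harmonic (n + 1) : ℝ) - log ((n : ℝ) + 1)) - ((harmonic n : ℝ) - log n)
      = 1 / ((n : ℝ) + 1) - log (1 + 1 / n) := by
  have hn₀ : (0 : ℝ) < n := by positivity
  have hlog : log ((n : ℝ) + 1) = log n + log (1 + 1 / n) := by
    rw [← log_mul hn₀.ne' (by positivity), mul_add, mul_one_div_cancel hn₀.ne', mul_one]
  rw [harmonic_succ]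
  push_cast
  rw [hlog]
  ring

lemma harmonic_sub_log_sub_correction_add_error_le_succ {n : ℕ} (hn : 64 ≤ n) :
    (harmonic n : ℝ) - log n - (harmonicCorrection n + harmonicCorrectionError n)
      ≤ (harmonic (n + 1) : ℝ) - log (n + 1 : ℕ)
        - (harmonicCorrection (n + 1 : ℕ) + harmonicCorrectionError (n + 1 : ℕ)) := by
  have hstep := harmonic_sub_log_succ_sub (by omega : n ≠ 0)
  have hbound := log_one_add_inv_sub_inv_add_one_le (by exact_mod_cast hn : (64 : ℝ) ≤ n)
  push_cast
  linarith

lemma harmonic_sub_log_sub_correction_sub_error_succ_le {n : ℕ} (hn : 64 ≤ n) :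
    (harmonic (n + 1) : ℝ) - log (n + 1 : ℕ)
        - (harmonicCorrection (n + 1 : ℕ) - harmonicCorrectionError (n + 1 : ℕ))
      ≤ (harmonic n : ℝ) - log n - (harmonicCorrection n - harmonicCorrectionError n) := by
  have hstep := harmonic_sub_log_succ_sub (by omega : n ≠ 0)
  have hbound := le_log_one_add_inv_sub_inv_add_one (by exact_mod_cast hn : (64 : ℝ) ≤ n)
  push_cast
  linarith

lemma harmonic_sixtyFour :
    harmonic 64 = 623171679694215690971693339 / 131362987122535807501262400 := by
  norm_num [harmonic, Finset.sum_range_succ]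

lemma eulerMascheroniConstant_mem_Ioo :
    eulerMascheroniConstant ∈ Set.Ioo 0.577215 0.577216 := by
  have hlim (s : ℝ) : Tendsto (fun n : ℕ => (harmonic n : ℝ) - log n
      - (harmonicCorrection n + s * harmonicCorrectionError n)) atTop
      (𝓝 eulerMascheroniConstant) := by
    simpa using tendsto_harmonic_sub_log.sub ((tendsto_harmonicCorrection.add
      (tendsto_harmonicCorrectionError.const_mul s)).comp tendsto_natCast_atTop_atTop)
  have hlo := le_of_tendsto_of_le_succ (k := 64)
    (fun n hn => by simpa using harmonic_sub_log_sub_correction_add_error_le_succ hn) (hlim 1)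
  have hhi := ge_of_tendsto_of_succ_le (k := 64)
    (fun n hn => by
      simpa [sub_eq_add_neg] using harmonic_sub_log_sub_correction_sub_error_succ_le hn)
    (hlim (-1))
  have hlog : log ((64 : ℕ) : ℝ) = 6 * log 2 := by
    rw [show ((64 : ℕ) : ℝ) = 2 ^ 6 by norm_num, log_pow]
    norm_num
  rw [harmonic_sixtyFour, hlog] at hlo hhi
  norm_num [harmonicCorrection, harmonicCorrectionError] at hlo hhi
  constructor <;> linarith [log_two_lt_d9, log_two_gt_d9]

open Filter Real in
theorem euler_mascheroni_exists :
    ∃ γ : ℝ, Tendsto (fun x : ℕ => (∑ k ∈ Finset.Icc 1 x, (1 : ℝ) / k) - Real.log x)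
        atTop (nhds γ) ∧ 0.577215 < γ ∧ γ < 0.577216 := by
  refine ⟨eulerMascheroniConstant, ?_, eulerMascheroniConstant_mem_Ioo⟩
  simpa [harmonic_eq_sum_Icc, one_div] using tendsto_harmonic_sub_log
end
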